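/- Let a = (a1, a2, a3, a4) ∈ ℝ⁴, m a positive integer, and c ∈ ℝ with c ∉ {a1, a2, a3, a4}, and suppose det M_m(a,c) = 0, where M_m(a,c) has rows (m²(a1-c)-1, 1, 1, -1), (-1, m²(a2-c)+1, 1, -1), (1, -1, m²(a3-c)-1, 1), (1, -1, -1, m²(a4-c)+1). Then the kernel of M_m(a,c) is one-dimensional and is spanned by the vector ((a1-c)⁻¹, (a2-c)⁻¹, -(a3-c)⁻¹, -(a4-c)⁻¹). -/

import Mathlib

/-!
With `k = m²`, `d = a - c`, `u = (1, 1, -1, -1)` and `w = (-1, 1, 1, -1)`, the matrix is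
`k • diagonal d + u wᵀ`, a rank-one perturbation of an invertible diagonal matrix `D`.
If `D x + (w ⬝ x) u = 0` then `x = -(w ⬝ x) D⁻¹ u`, so the kernel always lies on the line
through `D⁻¹ u = k⁻¹ (d₁⁻¹, d₂⁻¹, -d₃⁻¹, -d₄⁻¹)`. By the matrix determinant lemma,
`det = det D · (1 + w ⬝ D⁻¹ u)`, so vanishing of the determinant says exactly that `D⁻¹ u`
is itself in the kernel.
-/

namespace Matrix

variable {n K : Type*} [Fintype n] [DecidableEq n] [Field K]

theorem diagonal_add_vecMulVec_eq_diagonal_mul {d : n → K} (hd : ∀ i, d i ≠ 0) (u w : n → K) :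
    diagonal d + vecMulVec u w = diagonal d * (1 + vecMulVec (u / d) w) := by
  ext i j
  rw [diagonal_mul, Matrix.add_apply, Matrix.add_apply, vecMulVec_apply, vecMulVec_apply,
    Pi.div_apply, mul_add, ← mul_assoc, mul_div_cancel₀ _ (hd i)]
  by_cases hij : i = j
  · subst hij; simp
  · simp [hij]

theorem det_diagonal_add_vecMulVec {d : n → K} (hd : ∀ i, d i ≠ 0) (u w : n → K) :
    (diagonal d + vecMulVec u w).det = (∏ i, d i) * (1 + w ⬝ᵥ (u / d)) := by
  rw [diagonal_add_vecMulVec_eq_diagonal_mul hd, det_mul, det_diagonal, vecMulVec_eq Unit,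
    det_one_add_replicateCol_mul_replicateRow]

theorem diagonal_add_vecMulVec_mulVec (d u w x : n → K) :
    (diagonal d + vecMulVec u w) *ᵥ x = d * x + (w ⬝ᵥ x) • u := by
  ext i
  simp [add_mulVec, mulVec_diagonal, vecMulVec_mulVec]

theorem ker_diagonal_add_vecMulVec {d : n → K} (hd : ∀ i, d i ≠ 0) {u w : n → K}
    (hdet : (diagonal d + vecMulVec u w).det = 0) :
    LinearMap.ker (diagonal d + vecMulVec u w).mulVecLin = K ∙ (u / d) := by
  have hw : w ⬝ᵥ (u / d) = -1 := by
    rw [det_diagonal_add_vecMulVec hd, mul_eq_zero] at hdet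
    exact eq_neg_of_add_eq_zero_right <|
      hdet.resolve_left (Finset.prod_ne_zero_iff.mpr fun i _ => hd i)
  apply le_antisymm
  · intro x hx
    rw [LinearMap.mem_ker, mulVecLin_apply, diagonal_add_vecMulVec_mulVec] at hx
    refine Submodule.mem_span_singleton.mpr ⟨-(w ⬝ᵥ x), funext fun i => ?_⟩
    have hxi := congrFun hx i
    simp only [Pi.add_apply, Pi.mul_apply, Pi.smul_apply, smul_eq_mul, Pi.zero_apply] at hxi
    simp only [Pi.smul_apply, Pi.div_apply, smul_eq_mul]
    field_simp [hd i]
    linear_combination -hxi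
  · rw [Submodule.span_singleton_le_iff_mem, LinearMap.mem_ker, mulVecLin_apply,
      diagonal_add_vecMulVec_mulVec, hw]
    ext i
    simp [mul_div_cancel₀ _ (hd i)]

end Matrix

open Matrix in
theorem stmt_4 (a1 a2 a3 a4 c : ℝ) (m : ℕ) (hm : 0 < m)
    (h1 : c ≠ a1) (h2 : c ≠ a2) (h3 : c ≠ a3) (h4 : c ≠ a4)
    (hdet : Matrix.det
      !![(m : ℝ)^2 * (a1 - c) - 1, 1, 1, -1;
         -1, (m : ℝ)^2 * (a2 - c) + 1, 1, -1;
         1, -1, (m : ℝ)^2 * (a3 - c) - 1, 1;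
         1, -1, -1, (m : ℝ)^2 * (a4 - c) + 1] = 0) :
    LinearMap.ker (Matrix.mulVecLin
      !![(m : ℝ)^2 * (a1 - c) - 1, 1, 1, -1;
         -1, (m : ℝ)^2 * (a2 - c) + 1, 1, -1;
         1, -1, (m : ℝ)^2 * (a3 - c) - 1, 1;
         1, -1, -1, (m : ℝ)^2 * (a4 - c) + 1])
      = Submodule.span ℝ {![(a1 - c)⁻¹, (a2 - c)⁻¹, -(a3 - c)⁻¹, -(a4 - c)⁻¹]}
    ∧ Module.finrank ℝ (LinearMap.ker (Matrix.mulVecLin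
      !![(m : ℝ)^2 * (a1 - c) - 1, 1, 1, -1;
         -1, (m : ℝ)^2 * (a2 - c) + 1, 1, -1;
         1, -1, (m : ℝ)^2 * (a3 - c) - 1, 1;
         1, -1, -1, (m : ℝ)^2 * (a4 - c) + 1])) = 1 := by
  set k : ℝ := (m : ℝ) ^ 2
  have hk : k ≠ 0 := by positivity
  have h1' := sub_ne_zero.mpr h1.symm
  have h2' := sub_ne_zero.mpr h2.symm
  have h3' := sub_ne_zero.mpr h3.symm
  have h4' := sub_ne_zero.mpr h4.symm
  have hM : !![k * (a1 - c) - 1, 1, 1, -1; -1, k * (a2 - c) + 1, 1, -1;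
      1, -1, k * (a3 - c) - 1, 1; 1, -1, -1, k * (a4 - c) + 1] =
      diagonal ![k * (a1 - c), k * (a2 - c), k * (a3 - c), k * (a4 - c)] +
        vecMulVec ![1, 1, -1, -1] ![-1, 1, 1, -1] := by
    ext i j
    fin_cases i <;> fin_cases j <;> simp <;> ring
  have hd : ∀ i, ![k * (a1 - c), k * (a2 - c), k * (a3 - c), k * (a4 - c)] i ≠ 0 := by
    intro i
    fin_cases i <;> simp [hk, h1', h2', h3', h4']
  have hv : ![1, 1, -1, -1] / ![k * (a1 - c), k * (a2 - c), k * (a3 - c), k * (a4 - c)] =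
      k⁻¹ • ![(a1 - c)⁻¹, (a2 - c)⁻¹, -(a3 - c)⁻¹, -(a4 - c)⁻¹] := by
    ext i
    fin_cases i <;> simp [neg_div, mul_comm]
  rw [hM] at hdet ⊢
  rw [ker_diagonal_add_vecMulVec hd hdet, hv,
    Submodule.span_singleton_smul_eq (inv_ne_zero hk).isUnit]
  refine ⟨rfl, finrank_span_singleton fun hzero => ?_⟩
  simpa [h1'] using congrFun hzero 0
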